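/- Let n, h be positive naturals and ℓ a positive real. Let (a_i)_{i=1}^{m} be a sequence of nonnegative reals with m = ⌈log₂ h⌉ · ⌈ℓ⌉ terms, and let T_j = Σ_{i ≥ j} a_i + B for each j (where B ≥ 0 is a fixed 'remainder'). Suppose B > n/h, T_1 ≤ n, and ℓ ≥ 1. Then there exists an index i* with 1 ≤ i* ≤ m such that a_{i*} ≤ T_{i*+1}/ℓ. -/

import Mathlib

/-!
If the conclusion failed, every layer would satisfy `a i > T (i + 1) / ℓ`, i.e.
`T i = a i + T (i + 1) > (1 + 1/ℓ) T (i + 1)`. Iterating over the `m` layers gives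
`T 1 ≥ (1 + 1/ℓ)^m B`, and by Bernoulli `(1 + 1/ℓ)^⌈ℓ⌉ ≥ 2`, so `(1 + 1/ℓ)^m ≥ 2^⌈log₂ h⌉ ≥ h`.
Hence `T 1 ≥ h B > n`, contradicting `T 1 ≤ n`.
-/

open Finset

lemma pow_mul_le_of_forall_mul_le {T : ℕ → ℝ} {r : ℝ} (hr : 0 ≤ r) (lo : ℕ) :
    ∀ k, (∀ i, lo ≤ i → i < lo + k → r * T (i + 1) ≤ T i) → r ^ k * T (lo + k) ≤ T lo
  | 0, _ => by simp
  | k + 1, hT =>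
    calc r ^ (k + 1) * T (lo + (k + 1)) = r ^ k * (r * T (lo + k + 1)) := by ring_nf
      _ ≤ r ^ k * T (lo + k) := by gcongr; exact hT _ (by omega) (by omega)
      _ ≤ T lo := pow_mul_le_of_forall_mul_le hr lo k fun i hi hik ↦ hT i hi (by omega)

lemma two_le_one_add_inv_pow_ceil {ℓ : ℝ} (hℓ : 0 < ℓ) : 2 ≤ (1 + ℓ⁻¹) ^ ⌈ℓ⌉₊ := by
  have hceil : 1 ≤ ⌈ℓ⌉₊ * ℓ⁻¹ := by
    rw [← div_eq_mul_inv, one_le_div hℓ]; exact Nat.le_ceil ℓ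
  linarith [one_add_mul_le_pow (by linarith [inv_pos.2 hℓ] : (-2 : ℝ) ≤ ℓ⁻¹) ⌈ℓ⌉₊]

lemma le_one_add_inv_pow_clog_mul_ceil (h : ℕ) {ℓ : ℝ} (hℓ : 0 < ℓ) :
    (h : ℝ) ≤ (1 + ℓ⁻¹) ^ (Nat.clog 2 h * ⌈ℓ⌉₊) :=
  calc (h : ℝ) ≤ 2 ^ Nat.clog 2 h := by exact_mod_cast Nat.le_pow_clog one_lt_two h
    _ ≤ ((1 + ℓ⁻¹) ^ ⌈ℓ⌉₊) ^ Nat.clog 2 h := by gcongr; exact two_le_one_add_inv_pow_ceil hℓ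
    _ = (1 + ℓ⁻¹) ^ (Nat.clog 2 h * ⌈ℓ⌉₊) := by rw [← pow_mul, Nat.mul_comm]

theorem stmt_2_general (n h : ℕ) (hh : 0 < h) (ℓ : ℝ) (hℓ : 1 ≤ ℓ)
    (m : ℕ) (hm : m = Nat.clog 2 h * ⌈ℓ⌉₊)
    (a : ℕ → ℝ)
    (B : ℝ)
    (T : ℕ → ℝ) (hT : ∀ j, T j = (∑ i ∈ Finset.Icc j m, a i) + B)
    (hBlarge : B > (n : ℝ) / h) (hT1 : T 1 ≤ (n : ℝ)) :
    ∃ iStar, 1 ≤ iStar ∧ iStar ≤ m ∧ a iStar ≤ T (iStar + 1) / ℓ := by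
  by_contra! hlarge
  have hℓ0 : 0 < ℓ := by linarith
  have hBpos : 0 < B := lt_of_le_of_lt (by positivity) hBlarge
  have hgrowth : (1 + ℓ⁻¹) ^ m * T (1 + m) ≤ T 1 := by
    refine pow_mul_le_of_forall_mul_le (by positivity) 1 m fun i hi him ↦ ?_
    have hsplit : T i = a i + T (i + 1) := by
      rw [hT, hT, ← add_sum_Ioc_eq_sum_Icc (by omega), Icc_add_one_left_eq_Ioc, add_assoc]
    linarith [hlarge i hi (by omega), div_eq_mul_inv (T (i + 1)) ℓ]
  have hTlast : T (1 + m) = B := by simp [hT]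
  have hh0 : (0 : ℝ) < h := by exact_mod_cast hh
  have : (n : ℝ) < T 1 :=
    calc (n : ℝ) = h * (n / h) := by field_simp
      _ < h * B := by gcongr
      _ ≤ (1 + ℓ⁻¹) ^ m * B := by
        gcongr; rw [hm]; exact le_one_add_inv_pow_clog_mul_ceil h hℓ0
      _ ≤ T 1 := hTlast ▸ hgrowth
  linarith

theorem stmt_2 (n h : ℕ) (hn : 0 < n) (hh : 0 < h) (ℓ : ℝ) (hℓ : 1 ≤ ℓ)
    (m : ℕ) (hm : m = Nat.clog 2 h * ⌈ℓ⌉₊)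
    (a : ℕ → ℝ) (ha : ∀ i, 0 ≤ a i)
    (B : ℝ) (hB : 0 ≤ B)
    (T : ℕ → ℝ) (hT : ∀ j, T j = (∑ i ∈ Finset.Icc j m, a i) + B)
    (hBlarge : B > (n : ℝ) / h) (hT1 : T 1 ≤ (n : ℝ)) :
    ∃ iStar, 1 ≤ iStar ∧ iStar ≤ m ∧ a iStar ≤ T (iStar + 1) / ℓ :=
  stmt_2_general n h hh ℓ hℓ m hm a B T hT hBlarge hT1
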